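/- arXiv:1407.0529 — 2 statements merged into one kernel-verified Lean document; each statement's English description precedes it below -/
import Mathlib

section
/- Let u : ℝ × ℝ → ℝ be smooth and define the operators acting on smooth functions φ : ℝ × ℝ → ℝ by L̀φ = φ_xx + uφ and M̀φ = -4φ_xxx - 6uφ_x - 3u_x φ. If u satisfies the KdV equation u_t + u_xxx + 6uu_x = 0, then for every smooth φ, (∂/∂t of L̀ applied to φ, i.e. u_t φ) equals (M̀L̀ - L̀M̀)φ; equivalently u_t·φ = [M̀, L̀]φ pointwise. -/
/-- Partial derivative in the first (space) variable. -/
noncomputable def dx (f : ℝ → ℝ → ℝ) : ℝ → ℝ → ℝ := fun x t => deriv (fun y => f y t) x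

/-- Partial derivative in the second (time) variable. -/
noncomputable def dt (f : ℝ → ℝ → ℝ) : ℝ → ℝ → ℝ := fun x t => deriv (fun s => f x s) t

/-- KdV Lax operator L̀φ = φ_xx + uφ. -/
noncomputable def Lop (u φ : ℝ → ℝ → ℝ) : ℝ → ℝ → ℝ :=
  fun x t => dx (dx φ) x t + u x t * φ x t

/-- KdV Lax operator M̀φ = -4φ_xxx - 6uφ_x - 3u_x φ. -/
noncomputable def Mop (u φ : ℝ → ℝ → ℝ) : ℝ → ℝ → ℝ :=
  fun x t => -4 * dx (dx (dx φ)) x t - 6 * u x t * dx φ x t - 3 * dx u x t * φ x t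



theorem deriv_fun_add' {f g : ℝ → ℝ} (hf : Differentiable ℝ f) (hg : Differentiable ℝ g) :
    deriv (fun y => f y + g y) = fun y => deriv f y + deriv g y :=
  funext fun y => deriv_add (hf y) (hg y)

theorem deriv_fun_mul' {f g : ℝ → ℝ} (hf : Differentiable ℝ f) (hg : Differentiable ℝ g) :
    deriv (fun y => f y * g y) = fun y => deriv f y * g y + f y * deriv g y :=
  funext fun y => deriv_mul (hf y) (hg y)

theorem deriv_fun_sub' {f g : ℝ → ℝ} (hf : Differentiable ℝ f) (hg : Differentiable ℝ g) :
    deriv (fun y => f y - g y) = fun y => deriv f y - deriv g y :=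
  funext fun y => deriv_sub (hf y) (hg y)

theorem key (U P : ℝ → ℝ) (hU : ContDiff ℝ (⊤ : ℕ∞) U) (hP : ContDiff ℝ (⊤ : ℕ∞) P) (x : ℝ) :
    -(deriv (deriv (deriv U)) x + 6 * U x * deriv U x) * P x =
      (-4 * deriv (deriv (deriv (fun y => deriv (deriv P) y + U y * P y))) x
        - 6 * U x * deriv (fun y => deriv (deriv P) y + U y * P y) x
        - 3 * deriv U x * (deriv (deriv P) x + U x * P x))
      - (deriv (deriv (fun y => -4 * deriv (deriv (deriv P)) y - 6 * U y * deriv P y - 3 * deriv U y * P y)) x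
        + U x * (-4 * deriv (deriv (deriv P)) x - 6 * U x * deriv P x - 3 * deriv U x * P x)) := by
  replace hU : ContDiff ℝ (⊤:ℕ∞) U := hU.of_le (by simp)
  replace hP : ContDiff ℝ (⊤:ℕ∞) P := hP.of_le (by simp)
  have hU1 : ContDiff ℝ (⊤:ℕ∞) (deriv U) := (contDiff_infty_iff_deriv.mp hU).2
  have hU2 : ContDiff ℝ (⊤:ℕ∞) (deriv (deriv U)) := (contDiff_infty_iff_deriv.mp hU1).2
  have hU3 : ContDiff ℝ (⊤:ℕ∞) (deriv (deriv (deriv U))) := (contDiff_infty_iff_deriv.mp hU2).2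
  have hP1 : ContDiff ℝ (⊤:ℕ∞) (deriv P) := (contDiff_infty_iff_deriv.mp hP).2
  have hP2 : ContDiff ℝ (⊤:ℕ∞) (deriv (deriv P)) := (contDiff_infty_iff_deriv.mp hP1).2
  have hP3 : ContDiff ℝ (⊤:ℕ∞) (deriv (deriv (deriv P))) := (contDiff_infty_iff_deriv.mp hP2).2
  have hP4 : ContDiff ℝ (⊤:ℕ∞) (deriv (deriv (deriv (deriv P)))) := (contDiff_infty_iff_deriv.mp hP3).2
  have dU : Differentiable ℝ U := hU.differentiable (by simp)
  have dU1 : Differentiable ℝ (deriv U) := hU1.differentiable (by simp)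
  have dU2 : Differentiable ℝ (deriv (deriv U)) := hU2.differentiable (by simp)
  have dU3 : Differentiable ℝ (deriv (deriv (deriv U))) := hU3.differentiable (by simp)
  have dP : Differentiable ℝ P := hP.differentiable (by simp)
  have dP1 : Differentiable ℝ (deriv P) := hP1.differentiable (by simp)
  have dP2 : Differentiable ℝ (deriv (deriv P)) := hP2.differentiable (by simp)
  have dP3 : Differentiable ℝ (deriv (deriv (deriv P))) := hP3.differentiable (by simp)
  have dP4 : Differentiable ℝ (deriv (deriv (deriv (deriv P)))) := hP4.differentiable (by simp)
  simp (disch := fun_prop) only [deriv_fun_add', deriv_fun_mul', deriv_fun_sub', deriv_const', deriv_const_mul_field]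
  ring

/-- If u solves KdV, then (L̀)_t = [M̀, L̀] pointwise on smooth φ. -/
theorem kdv_lax_equation (u : ℝ → ℝ → ℝ)
    (hu : ContDiff ℝ (⊤ : ℕ∞) (fun p : ℝ × ℝ => u p.1 p.2))
    (hKdV : ∀ x t : ℝ, dt u x t + dx (dx (dx u)) x t + 6 * u x t * dx u x t = 0) :
    ∀ φ : ℝ → ℝ → ℝ, ContDiff ℝ (⊤ : ℕ∞) (fun p : ℝ × ℝ => φ p.1 p.2) →
      ∀ x t : ℝ,
        dt u x t * φ x t = Mop u (Lop u φ) x t - Lop u (Mop u φ) x t := by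
  intro φ hφ x t
  have hU : ContDiff ℝ (⊤ : ℕ∞) (fun y => u y t) :=
    hu.comp (contDiff_id.prodMk contDiff_const)
  have hP : ContDiff ℝ (⊤ : ℕ∞) (fun y => φ y t) :=
    hφ.comp (contDiff_id.prodMk contDiff_const)
  have hk : dt u x t + deriv (deriv (deriv (fun y => u y t))) x
      + 6 * u x t * deriv (fun y => u y t) x = 0 := hKdV x t
  have hdt : dt u x t =
      -(deriv (deriv (deriv (fun y => u y t))) x + 6 * u x t * deriv (fun y => u y t) x) := by
    linarith
  have hkey := key (fun y => u y t) (fun y => φ y t) hU hP x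
  have hrhs : Mop u (Lop u φ) x t - Lop u (Mop u φ) x t =
      (-4 * deriv (deriv (deriv (fun y => deriv (deriv (fun z => φ z t)) y + u y t * φ y t))) x
        - 6 * u x t * deriv (fun y => deriv (deriv (fun z => φ z t)) y + u y t * φ y t) x
        - 3 * deriv (fun y => u y t) x * (deriv (deriv (fun z => φ z t)) x + u x t * φ x t))
      - (deriv (deriv (fun y => -4 * deriv (deriv (deriv (fun z => φ z t))) y
            - 6 * u y t * deriv (fun z => φ z t) y - 3 * deriv (fun z => u z t) y * φ y t)) x
        + u x t * (-4 * deriv (deriv (deriv (fun z => φ z t))) x - 6 * u x t * deriv (fun z => φ z t) x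
            - 3 * deriv (fun z => u z t) x * φ x t)) := rfl
  rw [hrhs, hdt]
  exact hkey
end

section
/- Let u : ℝ × ℝ → ℝ be smooth and define L₁φ = φ_xxx + uφ_x and M₁φ = 9φ_xxxxx + 15uφ_xxx + 15u_x φ_xx + (5u² + 10u_xx)φ_x. Then for every smooth φ, (M₁L₁ - L₁M₁)φ = -(u_xxxxx + 5u u_xxx + 5u_x u_xx + 5u² u_x)·φ_x. Consequently, if u satisfies the Sawada–Kotera equation u_t + u_xxxxx + 5uu_xxx + 5u_x u_xx + 5u²u_x = 0, then u_t·φ_x = (M₁L₁ - L₁M₁)φ, i.e. (L₁)_t = [M₁, L₁]. -/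
/-- Sawada–Kotera Lax operator L₁φ = φ_xxx + uφ_x. -/
noncomputable def L1 (u φ : ℝ → ℝ → ℝ) : ℝ → ℝ → ℝ :=
  fun x t => dx (dx (dx φ)) x t + u x t * dx φ x t

/-- Sawada–Kotera operator M₁φ = 9φ_xxxxx + 15uφ_xxx + 15u_xφ_xx + (5u² + 10u_xx)φ_x. -/
noncomputable def M1 (u φ : ℝ → ℝ → ℝ) : ℝ → ℝ → ℝ :=
  fun x t => 9 * dx (dx (dx (dx (dx φ)))) x t + 15 * u x t * dx (dx (dx φ)) x t
    + 15 * dx u x t * dx (dx φ) x t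
    + (5 * (u x t) ^ 2 + 10 * dx (dx u) x t) * dx φ x t

lemma sliceCD {f : ℝ → ℝ → ℝ} (hf : ContDiff ℝ (⊤ : ℕ∞) (fun p : ℝ × ℝ => f p.1 p.2)) (t : ℝ) :
    ContDiff ℝ (⊤ : ℕ∞) (fun y => f y t) := hf.comp (contDiff_id.prodMk contDiff_const)

lemma dx_contDiff {f : ℝ → ℝ → ℝ} (hf : ContDiff ℝ (⊤ : ℕ∞) (fun p : ℝ × ℝ => f p.1 p.2)) :
    ContDiff ℝ (⊤ : ℕ∞) (fun p : ℝ × ℝ => dx f p.1 p.2) := by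
  have h1 : ∀ p : ℝ × ℝ, dx f p.1 p.2 = fderiv ℝ (fun q : ℝ × ℝ => f q.1 q.2) p ((1:ℝ), (0:ℝ)) := by
    intro p
    have hF := (hf.differentiable (by simp) (p.1, p.2)).hasFDerivAt
    have hg : HasDerivAt (fun y : ℝ => (y, p.2)) ((1:ℝ), (0:ℝ)) p.1 :=
      (hasDerivAt_id p.1).prodMk (hasDerivAt_const _ _)
    have h2 := hF.comp_hasDerivAt p.1 hg
    simpa [dx, Function.comp_def] using h2.deriv
  have h3 : ContDiff ℝ (⊤ : ℕ∞) (fun p : ℝ × ℝ => fderiv ℝ (fun q : ℝ × ℝ => f q.1 q.2) p ((1:ℝ),(0:ℝ))) :=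
    (hf.fderiv_right (by simp)).clm_apply contDiff_const
  rw [funext h1]; exact h3

lemma dx_add {f g : ℝ → ℝ → ℝ} (hf : ContDiff ℝ (⊤ : ℕ∞) (fun p : ℝ × ℝ => f p.1 p.2))
    (hg : ContDiff ℝ (⊤ : ℕ∞) (fun p : ℝ × ℝ => g p.1 p.2)) :
    dx (fun a b => f a b + g a b) = fun x t => dx f x t + dx g x t := by
  funext x t
  simp only [dx]
  exact deriv_fun_add ((sliceCD hf t).differentiable (by simp) x) ((sliceCD hg t).differentiable (by simp) x)

lemma dx_mul {f g : ℝ → ℝ → ℝ} (hf : ContDiff ℝ (⊤ : ℕ∞) (fun p : ℝ × ℝ => f p.1 p.2))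
    (hg : ContDiff ℝ (⊤ : ℕ∞) (fun p : ℝ × ℝ => g p.1 p.2)) :
    dx (fun a b => f a b * g a b) = fun x t => dx f x t * g x t + f x t * dx g x t := by
  funext x t
  simp only [dx]
  exact deriv_fun_mul ((sliceCD hf t).differentiable (by simp) x) ((sliceCD hg t).differentiable (by simp) x)

lemma dx_const_mul {f : ℝ → ℝ → ℝ} (c : ℝ) (hf : ContDiff ℝ (⊤ : ℕ∞) (fun p : ℝ × ℝ => f p.1 p.2))
    : dx (fun a b => c * f a b) = fun x t => c * dx f x t := by
  funext x t
  simp only [dx]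
  exact deriv_const_mul c ((sliceCD hf t).differentiable (by simp) x)

lemma dx_sq {f : ℝ → ℝ → ℝ} (hf : ContDiff ℝ (⊤ : ℕ∞) (fun p : ℝ × ℝ => f p.1 p.2)) :
    dx (fun a b => f a b ^ 2) = fun x t => 2 * f x t * dx f x t := by
  funext x t
  simp only [dx]
  have h := ((sliceCD hf t).differentiable (by simp) x).hasDerivAt.fun_pow 2
  simpa using h.deriv

lemma dx_const (c : ℝ) : dx (fun _ _ => c : ℝ → ℝ → ℝ) = fun _ _ => 0 := by
  funext x t
  simp [dx]

lemma L1_def (u φ : ℝ → ℝ → ℝ) :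
    L1 u φ = fun a b => dx (dx (dx φ)) a b + u a b * dx φ a b := rfl

lemma M1_def (u φ : ℝ → ℝ → ℝ) :
    M1 u φ = fun a b => 9 * dx (dx (dx (dx (dx φ)))) a b + 15 * u a b * dx (dx (dx φ)) a b
      + 15 * dx u a b * dx (dx φ) a b
      + (5 * (u a b) ^ 2 + 10 * dx (dx u) a b) * dx φ a b := rfl

set_option maxHeartbeats 4000000 in
/-- The commutator [M₁,L₁] is -(u_xxxxx + 5uu_xxx + 5u_xu_xx + 5u²u_x)·D_x,
and consequently (L₁)_t = [M₁, L₁] when u solves Sawada–Kotera. -/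
theorem sawada_kotera_lax1 (u : ℝ → ℝ → ℝ)
    (hu : ContDiff ℝ (⊤ : ℕ∞) (fun p : ℝ × ℝ => u p.1 p.2)) :
    (∀ φ : ℝ → ℝ → ℝ, ContDiff ℝ (⊤ : ℕ∞) (fun p : ℝ × ℝ => φ p.1 p.2) →
      ∀ x t : ℝ,
        M1 u (L1 u φ) x t - L1 u (M1 u φ) x t =
          -(dx (dx (dx (dx (dx u)))) x t + 5 * u x t * dx (dx (dx u)) x t
            + 5 * dx u x t * dx (dx u) x t + 5 * (u x t) ^ 2 * dx u x t) * dx φ x t) ∧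
    ((∀ x t : ℝ,
        dt u x t + dx (dx (dx (dx (dx u)))) x t + 5 * u x t * dx (dx (dx u)) x t
          + 5 * dx u x t * dx (dx u) x t + 5 * (u x t) ^ 2 * dx u x t = 0) →
      ∀ φ : ℝ → ℝ → ℝ, ContDiff ℝ (⊤ : ℕ∞) (fun p : ℝ × ℝ => φ p.1 p.2) →
        ∀ x t : ℝ,
          dt u x t * dx φ x t = M1 u (L1 u φ) x t - L1 u (M1 u φ) x t) := by
  have key : ∀ φ : ℝ → ℝ → ℝ, ContDiff ℝ (⊤ : ℕ∞) (fun p : ℝ × ℝ => φ p.1 p.2) →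
      ∀ x t : ℝ,
        M1 u (L1 u φ) x t - L1 u (M1 u φ) x t =
          -(dx (dx (dx (dx (dx u)))) x t + 5 * u x t * dx (dx (dx u)) x t
            + 5 * dx u x t * dx (dx u) x t + 5 * (u x t) ^ 2 * dx u x t) * dx φ x t := by
    intro φ hφ x t
    have hu1 := dx_contDiff hu
    have hu2 := dx_contDiff hu1
    have hu3 := dx_contDiff hu2
    have hu4 := dx_contDiff hu3
    have hu5 := dx_contDiff hu4
    have hφ1 := dx_contDiff hφ
    have hφ2 := dx_contDiff hφ1
    have hφ3 := dx_contDiff hφ2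
    have hφ4 := dx_contDiff hφ3
    have hφ5 := dx_contDiff hφ4
    have hφ6 := dx_contDiff hφ5
    have hφ7 := dx_contDiff hφ6
    have hφ8 := dx_contDiff hφ7
    simp only [M1_def, L1_def]
    simp (disch := fun_prop) only [dx_add, dx_mul, dx_const_mul, dx_sq, dx_const]
    ring
  refine ⟨key, fun hSK φ hφ x t => ?_⟩
  rw [key φ hφ x t]
  linear_combination dx φ x t * hSK x t
end
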